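/- arXiv:2002.01197 — 6 statements merged into one kernel-verified Lean document; each statement's English description precedes it below -/
import Mathlib

section
/- Let K ≥ 2 and M ≥ 2 be integers, γ = (1−1/K)^(M−1), and let x₁,…,x_K ∈ (0,1] with x̄_M denoting the average of the M largest values among x₁,…,x_K. Define p_k = max(1 − (γ·x̄_M / x_k)^(1/(M−1)), 0). Then the sum over k of p_k is at most 1. -/
open Real Finset

set_option maxHeartbeats 1000000

/-- Tangent-line bound for `v ↦ v ^ (-b)` at `v = 1`, for `0 < b ≤ 1`. -/
private lemma bern_aux {v b : ℝ} (hv : 0 < v) (hb0 : 0 < b) (hb1 : b ≤ 1) :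
    1 + b - b * v ≤ v ^ (-b) := by
  have h1 : v ^ b ≤ 1 + b * (v - 1) := by
    have := rpow_one_add_le_one_add_mul_self (s := v - 1) (by linarith) hb0.le hb1
    simpa using this
  have h2 : 0 < v ^ b := Real.rpow_pos_of_pos hv b
  have h3 : v ^ (-b) = (v ^ b)⁻¹ := Real.rpow_neg hv.le b
  rw [h3]
  rcases le_or_gt (1 + b - b * v) 0 with h | h
  · exact h.trans (by positivity)
  · have hmul : v ^ b * (v ^ b)⁻¹ = 1 := mul_inv_cancel₀ h2.ne'
    nlinarith [sq_nonneg (1 - (1 + b - b * v)), mul_pos h (inv_pos.mpr h2)]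

theorem stmt1 (K M : ℕ) (hM : 2 ≤ M) (hMK : M ≤ K)
    (x : Fin K → ℝ) (hx : ∀ k, 0 < x k ∧ x k ≤ 1)
    (S : Finset (Fin K)) (hS : S.card = M)
    (htop : ∀ i ∈ S, ∀ j ∉ S, x j ≤ x i)
    (γ xbar : ℝ) (hγ : γ = (1 - 1 / (K : ℝ)) ^ (M - 1))
    (hxbar : xbar = (∑ i ∈ S, x i) / M) :
    ∑ k, max (1 - (γ * xbar / x k) ^ ((1 : ℝ) / ((M : ℝ) - 1))) 0 ≤ 1 := by
  have hK2 : 2 ≤ K := hM.trans hMK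
  have hKR : (2 : ℝ) ≤ (K : ℝ) := by exact_mod_cast hK2
  have hMR : (2 : ℝ) ≤ (M : ℝ) := by exact_mod_cast hM
  have hMKR : (M : ℝ) ≤ (K : ℝ) := by exact_mod_cast hMK
  have hKpos : (0 : ℝ) < K := by linarith
  have hK1 : (0 : ℝ) < (K : ℝ) - 1 := by linarith
  have hM1 : (0 : ℝ) < (M : ℝ) - 1 := by linarith
  set β : ℝ := (1 : ℝ) / ((M : ℝ) - 1) with hβ
  have hβpos : 0 < β := by positivity
  have hβ1 : β ≤ 1 := by rw [hβ, div_le_one hM1]; linarith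
  set a : ℝ := 1 - 1 / (K : ℝ) with ha_def
  have ha : 0 < a := by
    rw [ha_def, sub_pos, div_lt_one hKpos]; linarith
  -- cast of M - 1
  have hMcast : ((M - 1 : ℕ) : ℝ) = (M : ℝ) - 1 := by
    have : (1 : ℕ) ≤ M := by omega
    push_cast [Nat.cast_sub this]; ring
  have hγpos : 0 < γ := by rw [hγ]; exact pow_pos ha _
  have hγβ : γ ^ β = a := by
    rw [hγ, ← Real.rpow_natCast (1 - 1 / (K : ℝ)) (M - 1), ← Real.rpow_mul ha.le, hMcast]
    rw [show ((M : ℝ) - 1) * β = 1 by rw [hβ]; field_simp]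
    exact Real.rpow_one _
  -- xbar positivity and basic sum facts
  have hSne : S.Nonempty := Finset.card_pos.mp (by omega)
  have hsumS : ∑ i ∈ S, x i = (M : ℝ) * xbar := by
    rw [hxbar]; field_simp
  have hxbar_pos : 0 < xbar := by
    rw [hxbar]
    exact div_pos (Finset.sum_pos (fun i _ => (hx i).1) hSne) (by linarith)
  have hex_top : ∃ i ∈ S, xbar ≤ x i := by
    apply Finset.exists_le_of_sum_le hSne
    rw [Finset.sum_const, hS, nsmul_eq_mul, hsumS]
  have houtside : ∀ k ∉ S, x k ≤ xbar := by
    intro k hk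
    have h := Finset.sum_le_sum (fun i hi => htop i hi k hk)
    rw [Finset.sum_const, hS, nsmul_eq_mul, hsumS] at h
    nlinarith
  set x0 : ℝ := xbar * ((K : ℝ) - (M : ℝ)) / ((K : ℝ) - 1) with hx0_def
  have hx0_nonneg : 0 ≤ x0 := by
    apply div_nonneg (mul_nonneg hxbar_pos.le (by linarith)) hK1.le
  have hx0_le : x0 ≤ xbar := by
    rw [hx0_def, div_le_iff₀ hK1]
    nlinarith
  have hx0K1 : ((K : ℝ) - 1) * x0 = ((K : ℝ) - (M : ℝ)) * xbar := by
    rw [hx0_def]; field_simp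
  -- x0 ≤ γ * xbar
  have hx0c : x0 ≤ γ * xbar := by
    have hbern : 1 - ((M : ℝ) - 1) / K ≤ γ := by
      have hds : 1 / (K : ℝ) ≤ 1 := by rw [div_le_one hKpos]; linarith
      have h := one_add_mul_le_pow (a := -(1 / (K : ℝ))) (by linarith) (M - 1)
      rw [hγ]
      calc 1 - ((M : ℝ) - 1) / K = 1 + ((M - 1 : ℕ) : ℝ) * (-(1 / K)) := by
            rw [hMcast]; ring
        _ ≤ (1 + -(1 / (K : ℝ))) ^ (M - 1) := h
        _ = (1 - 1 / (K : ℝ)) ^ (M - 1) := by ring_nf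
    have h1 : ((K : ℝ) - M) / ((K : ℝ) - 1) ≤ γ := by
      have h2 : ((K : ℝ) - M) / ((K : ℝ) - 1) ≤ 1 - ((M : ℝ) - 1) / K := by
        rw [div_le_iff₀ hK1]
        have : (1 - ((M : ℝ) - 1) / K) * ((K : ℝ) - 1)
            = ((K : ℝ) - M) + ((M : ℝ) - 1) / K := by field_simp; ring
        rw [this]
        have : 0 ≤ ((M : ℝ) - 1) / K := by positivity
        linarith
      linarith
    calc x0 = ((K : ℝ) - M) / ((K : ℝ) - 1) * xbar := by rw [hx0_def]; ring
      _ ≤ γ * xbar := by nlinarith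
  -- the line value at x0 is 1
  have hline0 : a * (1 + β) - a * β * x0 / xbar = 1 := by
    rw [ha_def, hβ, hx0_def]
    field_simp
    ring
  -- per-k bound
  set y : Fin K → ℝ := fun k => max (x k) x0 with hy_def
  have hkey : ∀ k, max (1 - (γ * xbar / x k) ^ β) 0
      ≤ 1 - (a * (1 + β) - a * β * y k / xbar) := by
    intro k
    have hxk := hx k
    have hmin : a * (1 + β) - a * β * y k / xbar ≤ min ((γ * xbar / x k) ^ β) 1 := by
      apply le_min
      · -- line ≤ rpow term
        by_cases hcase : x0 ≤ x k
        · have hyk : y k = x k := max_eq_left hcase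
          rw [hyk]
          have hv : 0 < x k / xbar := div_pos hxk.1 hxbar_pos
          have hb := bern_aux hv hβpos hβ1
          have hrw : (γ * xbar / x k) ^ β = a * (x k / xbar) ^ (-β) := by
            rw [show γ * xbar / x k = γ * (xbar / x k) by ring,
              Real.mul_rpow hγpos.le (div_nonneg hxbar_pos.le hxk.1.le), hγβ,
              show xbar / x k = (x k / xbar)⁻¹ by rw [inv_div],
              Real.inv_rpow hv.le, ← Real.rpow_neg hv.le]
          rw [hrw]
          have := mul_le_mul_of_nonneg_left hb ha.le
          calc a * (1 + β) - a * β * x k / xbar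
              = a * (1 + β - β * (x k / xbar)) := by ring
            _ ≤ a * (x k / xbar) ^ (-β) := mul_le_mul_of_nonneg_left hb ha.le
        · push_neg at hcase
          have hyk : y k = x0 := max_eq_right hcase.le
          rw [hyk, hline0]
          apply Real.one_le_rpow ?_ hβpos.le
          rw [le_div_iff₀ hxk.1, one_mul]
          exact le_trans hcase.le hx0c
      · -- line ≤ 1
        have h1 : a * β * x0 / xbar ≤ a * β * y k / xbar := by
          have h2 : a * β * x0 ≤ a * β * y k :=
            mul_le_mul_of_nonneg_left (le_max_right _ _) (by positivity)
          exact div_le_div_of_nonneg_right h2 hxbar_pos.le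
        linarith
    -- convert min to max
    rcases le_total ((γ * xbar / x k) ^ β) 1 with h | h
    · rw [min_eq_left h] at hmin
      rw [max_eq_left (by linarith)]
      linarith
    · rw [min_eq_right h] at hmin
      rw [max_eq_right (by linarith)]
      linarith
  -- sum of y is at most K * xbar
  have hcardc : ((Sᶜ.card : ℕ) : ℝ) = (K : ℝ) - M := by
    rw [Finset.card_compl, hS, Fintype.card_fin, Nat.cast_sub hMK]
  have hsumy : ∑ k, y k ≤ (K : ℝ) * xbar := by
    rw [← Finset.sum_add_sum_compl S y]
    by_cases hA : ∀ i ∈ S, x0 ≤ x i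
    · have h1 : ∑ k ∈ S, y k = ∑ k ∈ S, x k :=
        Finset.sum_congr rfl fun i hi => max_eq_left (hA i hi)
      have h2 : ∑ k ∈ Sᶜ, y k ≤ ∑ _k ∈ Sᶜ, xbar :=
        Finset.sum_le_sum fun k hk =>
          max_le (houtside k (Finset.mem_compl.mp hk)) hx0_le
      rw [Finset.sum_const, nsmul_eq_mul, hcardc] at h2
      rw [h1, hsumS]
      linarith
    · push_neg at hA
      obtain ⟨i0, hi0S, hi0⟩ := hA
      have hout : ∀ k ∈ Sᶜ, y k = x0 := by
        intro k hk
        exact max_eq_right ((htop i0 hi0S k (Finset.mem_compl.mp hk)).trans hi0.le)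
      have h2 : ∑ k ∈ Sᶜ, y k = ((K : ℝ) - M) * x0 := by
        rw [Finset.sum_congr rfl hout, Finset.sum_const, nsmul_eq_mul, hcardc]
      obtain ⟨i1, hi1S, hi1⟩ := hex_top
      have hyi1 : y i1 = x i1 := max_eq_left (hx0_le.trans hi1)
      have hcard_erase : (((S.erase i1).card : ℕ) : ℝ) = (M : ℝ) - 1 := by
        rw [Finset.card_erase_of_mem hi1S, hS, Nat.cast_sub (by omega)]
        norm_num
      have h1 : ∑ k ∈ S, y k ≤ ∑ k ∈ S, x k + ((M : ℝ) - 1) * x0 := by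
        rw [← Finset.add_sum_erase S y hi1S, ← Finset.add_sum_erase S x hi1S, hyi1]
        have h3 : ∑ k ∈ S.erase i1, y k ≤ ∑ k ∈ S.erase i1, (x k + x0) :=
          Finset.sum_le_sum fun i _ => max_le (by linarith [(hx i).1, hx0_nonneg])
            (by linarith [(hx i).1])
        rw [Finset.sum_add_distrib, Finset.sum_const, nsmul_eq_mul, hcard_erase] at h3
        linarith
      rw [hsumS] at h1
      have : ((K : ℝ) - 1) * x0 = ((K : ℝ) - M) * xbar := hx0K1
      linarith
  -- put everything together
  calc ∑ k, max (1 - (γ * xbar / x k) ^ β) 0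
      ≤ ∑ k, (1 - (a * (1 + β) - a * β * y k / xbar)) :=
        Finset.sum_le_sum fun k _ => hkey k
    _ = (K : ℝ) * (1 - a * (1 + β)) + a * β / xbar * ∑ k, y k := by
        rw [Finset.mul_sum]
        rw [Finset.sum_congr rfl (fun k _ => show
          (1 - (a * (1 + β) - a * β * y k / xbar))
            = (1 - a * (1 + β)) + a * β / xbar * y k by ring)]
        rw [Finset.sum_add_distrib, Finset.sum_const, Finset.card_univ,
          Fintype.card_fin, nsmul_eq_mul]
    _ ≤ (K : ℝ) * (1 - a * (1 + β)) + a * β / xbar * ((K : ℝ) * xbar) := by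
        have hc : 0 ≤ a * β / xbar := by positivity
        nlinarith [mul_le_mul_of_nonneg_left hsumy hc]
    _ = 1 := by
        rw [ha_def]
        field_simp
        ring
end

section
/- Let K ≥ 2, M ≥ 1 be integers and let real numbers p̂₁,…,p̂_K and p₁,…,p_K satisfy |p̂_k − p_k| ≤ ε for all k, where (1/K)·Σ_k (1 − p_k) = (1−1/K)^(M−1) and 0 < ε ≤ (1/2)·(1/K)·(1−1/K)^(M−1). Then the quantity 1 + log((1/K)·Σ_k (1 − p̂_k)) / log(1 − 1/K) lies strictly in the open interval (M − 1/2, M + 1/2), so rounding it to the nearest integer gives M. -/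
set_option maxHeartbeats 1000000


theorem stmt3 (K M : ℕ) (hK : 2 ≤ K) (hM : 1 ≤ M)
    (p phat : Fin K → ℝ)
    (hp : ∀ k, p k ∈ Set.Icc (0 : ℝ) 1) (hphat : ∀ k, phat k ∈ Set.Icc (0 : ℝ) 1)
    (ε : ℝ) (hε0 : 0 < ε)
    (herr : ∀ k, |phat k - p k| ≤ ε)
    (hsum : (1 / (K : ℝ)) * ∑ k, (1 - p k) = (1 - 1 / (K : ℝ)) ^ (M - 1))
    (hεsmall : ε ≤ (1 / 2) * (1 / (K : ℝ)) * (1 - 1 / (K : ℝ)) ^ (M - 1))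
    (hpos : 0 < (1 / (K : ℝ)) * ∑ k, (1 - phat k)) :
    (M : ℝ) - 1 / 2 <
      1 + Real.log ((1 / (K : ℝ)) * ∑ k, (1 - phat k)) / Real.log (1 - 1 / (K : ℝ)) ∧
    1 + Real.log ((1 / (K : ℝ)) * ∑ k, (1 - phat k)) / Real.log (1 - 1 / (K : ℝ)) <
      (M : ℝ) + 1 / 2 := by
  have hK2 : (2 : ℝ) ≤ (K : ℝ) := by exact_mod_cast hK
  have hKpos : (0 : ℝ) < (K : ℝ) := by linarith
  have hinvpos : (0 : ℝ) < 1 / (K : ℝ) := by positivity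
  have hinv : (1 : ℝ) / K ≤ 1 / 2 := by
    rw [div_le_div_iff₀ hKpos (by norm_num)]; linarith
  set q : ℝ := 1 - 1 / (K : ℝ) with hqdef
  have hq0 : 0 < q := by simp only [hqdef]; linarith
  have hq1 : q < 1 := by simp only [hqdef]; linarith
  have hlogq : Real.log q < 0 := Real.log_neg hq0 hq1
  have hQpos : 0 < q ^ (M - 1) := pow_pos hq0 _
  set S : ℝ := (1 / (K : ℝ)) * ∑ k, (1 - phat k) with hSdef
  -- |S - q^(M-1)| ≤ ε
  have key : |(∑ k, (1 - phat k)) - ∑ k, (1 - p k)| ≤ (K : ℝ) * ε := by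
    rw [← Finset.sum_sub_distrib]
    calc |∑ k, ((1 - phat k) - (1 - p k))|
        ≤ ∑ k, |(1 - phat k) - (1 - p k)| := Finset.abs_sum_le_sum_abs _ _
      _ ≤ ∑ _k : Fin K, ε := by
          refine Finset.sum_le_sum fun k _ => ?_
          have h := herr k
          have heq : (1 - phat k) - (1 - p k) = -(phat k - p k) := by ring
          rw [heq, abs_neg]; exact h
      _ = (K : ℝ) * ε := by simp [mul_comm]
  have hdiff : |S - q ^ (M - 1)| ≤ ε := by
    rw [← hsum, hSdef, ← mul_sub, abs_mul, abs_of_pos hinvpos]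
    calc (1 / (K : ℝ)) * |(∑ k, (1 - phat k)) - ∑ k, (1 - p k)|
        ≤ (1 / (K : ℝ)) * ((K : ℝ) * ε) := by
          exact mul_le_mul_of_nonneg_left key (le_of_lt hinvpos)
      _ = ε := by field_simp
  have habs := abs_le.mp hdiff
  have hεQ : ε ≤ q ^ (M - 1) * (1 / (2 * K)) := by
    calc ε ≤ (1 / 2) * (1 / (K : ℝ)) * q ^ (M - 1) := hεsmall
      _ = q ^ (M - 1) * (1 / (2 * K)) := by ring
  have hlow : q ^ (M - 1) * (1 - 1 / (2 * K)) ≤ S := by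
    have heq : q ^ (M - 1) * (1 - 1 / (2 * K))
        = q ^ (M - 1) - q ^ (M - 1) * (1 / (2 * K)) := by ring
    linarith [habs.1]
  have hhigh : S ≤ q ^ (M - 1) * (1 + 1 / (2 * K)) := by
    have heq : q ^ (M - 1) * (1 + 1 / (2 * K))
        = q ^ (M - 1) + q ^ (M - 1) * (1 / (2 * K)) := by ring
    linarith [habs.2]
  have h2Kpos : (0 : ℝ) < 2 * K := by linarith
  have hapos : (0 : ℝ) < 1 / (2 * K) := by positivity
  have hahalf : (1 : ℝ) / (2 * K) ≤ 1 / 4 := by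
    rw [div_le_div_iff₀ h2Kpos (by norm_num)]; linarith
  have h1a : (0 : ℝ) < 1 - 1 / (2 * K) := by linarith
  have h2a : 2 * (1 / (2 * (K : ℝ))) = 1 / (K : ℝ) := by
    field_simp
  -- (1 - 1/(2K))^2 > q
  have hsq1 : q < (1 - 1 / (2 * (K : ℝ))) ^ 2 := by
    simp only [hqdef]
    nlinarith [h2a, pow_pos hapos 2, mul_pos hapos hapos]
  -- (1 + 1/(2K))^2 * q < 1
  have hsq2 : (1 + 1 / (2 * (K : ℝ))) ^ 2 * q < 1 := by
    simp only [hqdef]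
    nlinarith [h2a, mul_pos hapos hapos, mul_pos (mul_pos hapos hapos) hapos]
  -- log(1 - 1/(2K)) > (1/2) log q
  have hA : (1 / 2) * Real.log q < Real.log (1 - 1 / (2 * K)) := by
    have h := Real.log_lt_log hq0 hsq1
    rw [Real.log_pow] at h
    push_cast at h
    linarith
  -- log(1 + 1/(2K)) < -(1/2) log q
  have hB : Real.log (1 + 1 / (2 * (K : ℝ))) < -(1 / 2) * Real.log q := by
    have h2 : Real.log ((1 + 1 / (2 * (K : ℝ))) ^ 2 * q) < 0 :=
      Real.log_neg (by positivity) hsq2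
    rw [Real.log_mul (by positivity) (ne_of_gt hq0), Real.log_pow] at h2
    push_cast at h2
    linarith
  have hcast : ((M - 1 : ℕ) : ℝ) = (M : ℝ) - 1 := by
    have := Nat.cast_sub hM (R := ℝ)
    simpa using this
  have hlogS_low : ((M : ℝ) - 1 / 2) * Real.log q < Real.log S := by
    have h1 : Real.log (q ^ (M - 1) * (1 - 1 / (2 * K))) ≤ Real.log S :=
      Real.log_le_log (by positivity) hlow
    rw [Real.log_mul (ne_of_gt hQpos) (ne_of_gt h1a), Real.log_pow, hcast] at h1
    linarith [hA]
  have hlogS_high : Real.log S < ((M : ℝ) - 3 / 2) * Real.log q := by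
    have hSpos : (0 : ℝ) < S := hpos
    have h1 : Real.log S ≤ Real.log (q ^ (M - 1) * (1 + 1 / (2 * K))) :=
      Real.log_le_log hSpos hhigh
    rw [Real.log_mul (ne_of_gt hQpos) (by positivity), Real.log_pow, hcast] at h1
    linarith [hB]
  constructor
  · have h : (M : ℝ) - 3 / 2 < Real.log S / Real.log q :=
      (lt_div_iff_of_neg hlogq).mpr hlogS_high
    linarith
  · have h : Real.log S / Real.log q < (M : ℝ) - 1 / 2 :=
      (div_lt_iff_of_neg hlogq).mpr hlogS_low
    linarith
end

section
/- (Comparison of RSD utility with sorted means under δ-heterogeneity) In the δ-heterogeneous setting where μ_k^j ∈ [(1−δ)μ_k, (1+δ)μ_k] for all players j and arms k with 0 ≤ δ < 1, if player j is the m-th dictator in a serial-dictatorship assignment (each previous dictator takes her most preferred remaining arm, and player j then takes her most preferred remaining arm), then the mean of the arm player j receives satisfies μ_(m)^j ≤ (received mean) ≤ ((1+δ)/(1−δ))²·μ_(m)^j, where μ_(m)^j is the m-th largest entry of (μ_k^j)_k. -/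
theorem stmt6 (M K : ℕ) (hMK : M ≤ K)
    (δ : ℝ) (hδ0 : 0 ≤ δ) (hδ1 : δ < 1)
    (μ : Fin K → ℝ) (hμpos : ∀ k, 0 < μ k)
    (μp : Fin M → Fin K → ℝ)
    (hhet : ∀ j k, (1 - δ) * μ k ≤ μp j k ∧ μp j k ≤ (1 + δ) * μ k)
    (hdistinct : ∀ j, Function.Injective (μp j))
    (A : Fin M → Fin K) (hA : Function.Injective A)
    -- serial dictatorship: each dictator takes her most preferred remaining arm
    (hSD : ∀ i : Fin M, ∀ k : Fin K, (∀ i' : Fin M, i' < i → A i' ≠ k) → μp i k ≤ μp i (A i))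
    (j : Fin M)
    -- S is the set of player j's top (j+1) arms, so its minimum value is her
    -- (j+1)-th largest mean (player j is the (j+1)-th dictator)
    (S : Finset (Fin K)) (hScard : S.card = j.1 + 1)
    (hStop : ∀ a ∈ S, ∀ b ∉ S, μp j b < μp j a) :
    S.inf' (Finset.card_pos.mp (by rw [hScard]; omega)) (μp j) ≤ μp j (A j) ∧
    μp j (A j) ≤ ((1 + δ) / (1 - δ)) ^ 2 * S.inf' (Finset.card_pos.mp (by rw [hScard]; omega)) (μp j) := by
  have h1δ : (0:ℝ) < 1 - δ := by linarith
  have h1δ' : (0:ℝ) < 1 + δ := by linarith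
  constructor
  · -- lower bound
    have hTcard : ((Finset.univ.filter (fun i : Fin M => i < j)).image A).card ≤ j.1 := by
      calc ((Finset.univ.filter (fun i : Fin M => i < j)).image A).card
          ≤ (Finset.univ.filter (fun i : Fin M => i < j)).card := Finset.card_image_le
        _ = j.1 := by
            rw [show (Finset.univ.filter (fun i : Fin M => i < j)) = Finset.Iio j by
              ext i; simp [Finset.mem_Iio]]
            simp
    obtain ⟨k, hkS, hknot⟩ : ∃ k ∈ S, k ∉ (Finset.univ.filter (fun i : Fin M => i < j)).image A := by
      by_contra h
      push_neg at h
      have := Finset.card_le_card h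
      omega
    have hk : μp j k ≤ μp j (A j) := by
      apply hSD j k
      intro i' hi' hEq
      exact hknot (Finset.mem_image.mpr ⟨i', by simp [hi'], hEq⟩)
    exact le_trans (Finset.inf'_le _ hkS) hk
  · -- upper bound
    set c : ℝ := ((1 - δ) / (1 + δ)) ^ 2 * μp j (A j) with hc
    have hkey : ∀ i : Fin M, i ≤ j → c ≤ μp j (A i) := by
      intro i hi
      have hab : (1 - δ) * μ (A j) ≤ (1 + δ) * μ (A i) := by
        rcases lt_or_eq_of_le hi with hlt | hEq
        · have h1 : μp i (A j) ≤ μp i (A i) := by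
            apply hSD i (A j)
            intro i' hi' hEq
            have : i' = j := hA hEq
            omega
          have h2 := (hhet i (A j)).1
          have h3 := (hhet i (A i)).2
          linarith
        · subst hEq
          nlinarith [hμpos (A i)]
      have h4 := (hhet j (A j)).2
      have h5 := (hhet j (A i)).1
      rw [hc, div_pow, div_mul_eq_mul_div, div_le_iff₀ (by positivity)]
      nlinarith [hμpos (A i), hμpos (A j), mul_pos h1δ h1δ']
    obtain ⟨k₀, hk₀S, hk₀⟩ := S.exists_mem_eq_inf' (Finset.card_pos.mp (by rw [hScard]; omega)) (μp j)
    have hinf : c ≤ S.inf' (Finset.card_pos.mp (by rw [hScard]; omega)) (μp j) := by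
      rw [hk₀]
      by_contra h
      push_neg at h
      set T : Finset (Fin K) := (Finset.univ.filter (fun i : Fin M => i ≤ j)).image A with hT
      have hTcard : T.card = j.1 + 1 := by
        rw [hT, Finset.card_image_of_injective _ hA,
          show (Finset.univ.filter (fun i : Fin M => i ≤ j)) = Finset.Iic j by
            ext i; simp [Finset.mem_Iic]]
        simp
      have hTS : T ⊆ S := by
        intro t ht
        obtain ⟨i, hi, rfl⟩ := Finset.mem_image.mp ht
        simp at hi
        by_contra htS
        have := hStop k₀ hk₀S (A i) htS
        have := hkey i hi
        linarith
      have hTeq : T = S := Finset.eq_of_subset_of_card_le hTS (by omega)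
      have : k₀ ∈ T := hTeq ▸ hk₀S
      obtain ⟨i, hi, hEq⟩ := Finset.mem_image.mp this
      simp at hi
      have := hkey i hi
      rw [hEq] at this
      linarith
    calc μp j (A j) = ((1 + δ) / (1 - δ)) ^ 2 * c := by
          rw [hc]; field_simp
      _ ≤ _ := by
          apply mul_le_mul_of_nonneg_left hinf (by positivity)
end

section
/- (Robust trimmed-mean estimator bound) Let M ≥ 3 and let a₁,…,a_{M−1} be real numbers (honest reports) and a_M an arbitrary real (the adversarial report). Define the trimmed mean ã = (1/(M−2))·Σ_{i ∉ {i_max, i_min}} a_i, where i_max and i_min are indices attaining the maximum and minimum of a₁,…,a_M. Then min_{j∈[M−1]} (1/(M−2))·Σ_{i∈[M−1], i≠j} a_i ≤ ã ≤ max_{j∈[M−1]} (1/(M−2))·Σ_{i∈[M−1], i≠j} a_i. -/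
theorem stmt9 (M : ℕ) (hM : 3 ≤ M) (a : Fin M → ℝ)
    (iM : Fin M)  -- the adversarial report; indices ≠ iM are the honest ones
    (imax imin : Fin M) (hne : imax ≠ imin)
    (hmax : ∀ i, a i ≤ a imax) (hmin : ∀ i, a imin ≤ a i)
    (honest : Finset (Fin M)) (hhonest : honest = Finset.univ.erase iM)
    (hnonempty : honest.Nonempty) :
    honest.inf' hnonempty
        (fun j => (∑ i ∈ honest.erase j, a i) / ((M : ℝ) - 2))
      ≤ (∑ i ∈ (Finset.univ.erase imax).erase imin, a i) / ((M : ℝ) - 2) ∧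
    (∑ i ∈ (Finset.univ.erase imax).erase imin, a i) / ((M : ℝ) - 2)
      ≤ honest.sup' hnonempty
          (fun j => (∑ i ∈ honest.erase j, a i) / ((M : ℝ) - 2)) := by
  have hMpos : (0:ℝ) < (M : ℝ) - 2 := by
    have : (3:ℝ) ≤ (M : ℝ) := by exact_mod_cast hM
    linarith
  subst hhonest
  set S := ∑ i : Fin M, a i with hS
  have hT : (∑ i ∈ (Finset.univ.erase imax).erase imin, a i) = S - a imax - a imin := by
    rw [Finset.sum_erase_eq_sub (by simp [Finset.mem_erase, Ne.symm hne]),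
        Finset.sum_erase_eq_sub (Finset.mem_univ _)]
  have hval : ∀ j ∈ Finset.univ.erase iM,
      (∑ i ∈ (Finset.univ.erase iM).erase j, a i) = S - a iM - a j := by
    intro j hj
    rw [Finset.sum_erase_eq_sub hj, Finset.sum_erase_eq_sub (Finset.mem_univ _)]
  constructor
  · by_cases h : imax = iM
    · have himin : imin ∈ Finset.univ.erase iM := by
        simp only [Finset.mem_erase, Finset.mem_univ, and_true]
        exact fun e => hne (h.trans e.symm)
      refine le_trans (Finset.inf'_le _ himin) ?_
      rw [hval imin himin, hT]
      apply div_le_div_of_nonneg_right ?_ hMpos.le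
      rw [← h]
    · have himax : imax ∈ Finset.univ.erase iM := by
        simp only [Finset.mem_erase, Finset.mem_univ, and_true]; exact h
      refine le_trans (Finset.inf'_le _ himax) ?_
      rw [hval imax himax, hT]
      apply div_le_div_of_nonneg_right ?_ hMpos.le
      linarith [hmin iM]
  · by_cases h : imin = iM
    · have himax : imax ∈ Finset.univ.erase iM := by
        simp only [Finset.mem_erase, Finset.mem_univ, and_true]
        exact fun e => hne (e.trans h.symm)
      refine le_trans ?_ (Finset.le_sup' _ himax)
      rw [hval imax himax, hT]
      apply div_le_div_of_nonneg_right ?_ hMpos.le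
      rw [← h]
      linarith
    · have himin : imin ∈ Finset.univ.erase iM := by
        simp only [Finset.mem_erase, Finset.mem_univ, and_true]; exact h
      refine le_trans ?_ (Finset.le_sup' _ himin)
      rw [hval imin himin, hT]
      apply div_le_div_of_nonneg_right ?_ hMpos.le
      linarith [hmax iM]
end

section
/- (Concentration of the trimmed mean) Let M ≥ 3, and let a₁,…,a_{M−1} be reals with |a_i − μ| ≤ ε₁ for all i ∈ [M−1] and |(1/(M−1))Σ_{i=1}^{M−1} a_i − μ| ≤ ε₂. Let a_M be arbitrary and ã the average of the M−2 values remaining after removing one maximum and one minimum among a₁,…,a_M. Then |ã − μ| ≤ ((M−1)/(M−2))·ε₂ + (1/(M−2))·ε₁. -/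
theorem stmt10 (M : ℕ) (hM : 3 ≤ M) (μ ε₁ ε₂ : ℝ) (hε₁ : 0 ≤ ε₁) (hε₂ : 0 ≤ ε₂)
    (a : Fin M → ℝ)
    (iM : Fin M)  -- the adversarial report; indices ≠ iM are the honest ones
    (hind : ∀ i, i ≠ iM → |a i - μ| ≤ ε₁)
    (havg : |(∑ i ∈ Finset.univ.erase iM, a i) / ((M : ℝ) - 1) - μ| ≤ ε₂)
    (imax imin : Fin M) (hne : imax ≠ imin)
    (hmax : ∀ i, a i ≤ a imax) (hmin : ∀ i, a imin ≤ a i) :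
    |(∑ i ∈ (Finset.univ.erase imax).erase imin, a i) / ((M : ℝ) - 2) - μ|
      ≤ (((M : ℝ) - 1) / ((M : ℝ) - 2)) * ε₂ + (1 / ((M : ℝ) - 2)) * ε₁ := by
  have hM3 : (3:ℝ) ≤ (M:ℝ) := by exact_mod_cast hM
  have hc : (0:ℝ) < (M:ℝ) - 2 := by linarith
  have hc1 : (0:ℝ) < (M:ℝ) - 1 := by linarith
  set total := ∑ i, a i with htotal
  have hsumS : ∑ i ∈ Finset.univ.erase iM, a i = total - a iM := by
    have := Finset.sum_erase_add Finset.univ a (Finset.mem_univ iM)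
    linarith
  have hsumT : ∑ i ∈ (Finset.univ.erase imax).erase imin, a i
      = total - a imax - a imin := by
    have h1 := Finset.sum_erase_add Finset.univ a (Finset.mem_univ imax)
    have h2 := Finset.sum_erase_add (Finset.univ.erase imax) a
      (Finset.mem_erase.mpr ⟨Ne.symm hne, Finset.mem_univ imin⟩)
    linarith
  -- honest-average bound in sum form
  have hS : |total - a iM - ((M:ℝ) - 1) * μ| ≤ ((M:ℝ) - 1) * ε₂ := by
    rw [hsumS] at havg
    rw [show (total - a iM) / ((M:ℝ)-1) - μ = (total - a iM - ((M:ℝ)-1)*μ) / ((M:ℝ)-1) by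
      field_simp] at havg
    rw [abs_div, abs_of_pos hc1, div_le_iff₀ hc1] at havg
    linarith [havg]
  -- reduce goal to numerator bound
  rw [hsumT, show (total - a imax - a imin) / ((M:ℝ)-2) - μ
      = (total - a imax - a imin - ((M:ℝ)-2)*μ) / ((M:ℝ)-2) by field_simp,
    abs_div, abs_of_pos hc, div_le_iff₀ hc]
  have hRHS : (((M:ℝ) - 1) / ((M:ℝ) - 2) * ε₂ + 1 / ((M:ℝ) - 2) * ε₁) * ((M:ℝ) - 2)
      = ((M:ℝ) - 1) * ε₂ + ε₁ := by field_simp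
  rw [hRHS]
  have hS' := abs_le.mp hS
  by_cases h1 : iM = imax
  · subst h1
    have hmin' := abs_le.mp (hind imin hne.symm)
    rw [abs_le]; constructor <;> linarith [hmin'.1, hmin'.2, hS'.1, hS'.2]
  · by_cases h2 : iM = imin
    · subst h2
      have hmax' := abs_le.mp (hind imax hne)
      rw [abs_le]; constructor <;> linarith [hmax'.1, hmax'.2, hS'.1, hS'.2]
    · have hmax' := abs_le.mp (hind imax (fun h => h1 h.symm))
      have hmin' := abs_le.mp (hind imin (fun h => h2 h.symm))
      have hub := hmax iM
      have hlb := hmin iM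
      rw [abs_le]; constructor <;>
        linarith [hmax'.1, hmax'.2, hmin'.1, hmin'.2, hS'.1, hS'.2]
end

section
/- (Punishment guarantee in the homogeneous case) Let K ≥ 2, 2 ≤ M ≤ K, γ = (1−1/K)^(M−1), and δ = (1−γ)/(1+3γ). Suppose each of M−1 players pulls arm k independently with probability at least p_k = max(1 − (γ·x̄_M/x_k)^(1/(M−1)), 0), where each estimate x_k satisfies (1−δ)x_k ≤ μ_k ≤ (1+δ)x_k and x̄_M is the average of the M largest x_k. Then for any arm k, the expected reward μ_k·(probability none of the M−1 players pulls k) is at most ((1+γ)/2)·(1/M)·Σ_{m=1}^M μ_(m). -/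
lemma sum_top_le' {K : ℕ} (μ : Fin K → ℝ) (S T : Finset (Fin K))
    (hcard : S.card = T.card) (htop : ∀ a ∈ T, ∀ b ∉ T, μ b ≤ μ a) :
    ∑ a ∈ S, μ a ≤ ∑ a ∈ T, μ a := by
  have h1 : ∑ a ∈ S ∩ T, μ a + ∑ a ∈ S \ T, μ a = ∑ a ∈ S, μ a :=
    Finset.sum_inter_add_sum_sdiff S T μ
  have h2 : ∑ a ∈ T ∩ S, μ a + ∑ a ∈ T \ S, μ a = ∑ a ∈ T, μ a :=
    Finset.sum_inter_add_sum_sdiff T S μ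
  have hc : (S \ T).card = (T \ S).card := Finset.card_sdiff_comm hcard
  have key : ∑ a ∈ S \ T, μ a ≤ ∑ a ∈ T \ S, μ a := by
    rcases Finset.eq_empty_or_nonempty (T \ S) with h | h
    · have h0 : S \ T = ∅ := Finset.card_eq_zero.mp (by rw [hc, h]; simp)
      simp [h0, h]
    · obtain ⟨a₀, ha₀, hmin⟩ := Finset.exists_min_image (T \ S) μ h
      have ha₀T : a₀ ∈ T := (Finset.mem_sdiff.mp ha₀).1
      calc ∑ a ∈ S \ T, μ a ≤ ∑ _a ∈ S \ T, μ a₀ := by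
            apply Finset.sum_le_sum
            intro b hb
            exact htop a₀ ha₀T b (Finset.mem_sdiff.mp hb).2
        _ = (S \ T).card • μ a₀ := by rw [Finset.sum_const]
        _ = (T \ S).card • μ a₀ := by rw [hc]
        _ = ∑ _a ∈ T \ S, μ a₀ := by rw [Finset.sum_const]
        _ ≤ ∑ a ∈ T \ S, μ a := Finset.sum_le_sum (fun a ha => hmin a ha)
  have hint : ∑ a ∈ S ∩ T, μ a = ∑ a ∈ T ∩ S, μ a := by rw [Finset.inter_comm]
  linarith

theorem stmt11 (K M : ℕ) (hK : 2 ≤ K) (hM : 2 ≤ M) (hMK : M ≤ K)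
    (γ δ : ℝ) (hγ : γ = (1 - 1 / (K : ℝ)) ^ (M - 1)) (hδ : δ = (1 - γ) / (1 + 3 * γ))
    (μ x : Fin K → ℝ) (hμ : ∀ k, 0 < μ k ∧ μ k ≤ 1)
    -- multiplicatively accurate estimates
    (hest : ∀ k, (1 - δ) * x k ≤ μ k ∧ μ k ≤ (1 + δ) * x k)
    -- Sx is the set of the M largest estimates
    (Sx : Finset (Fin K)) (hSx : Sx.card = M) (hSxtop : ∀ a ∈ Sx, ∀ b ∉ Sx, x b ≤ x a)
    -- Sμ is the set of the M largest true means
    (Sμ : Finset (Fin K)) (hSμ : Sμ.card = M) (hSμtop : ∀ a ∈ Sμ, ∀ b ∉ Sμ, μ b ≤ μ a)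
    -- each of the M-1 punishing players pulls arm k with probability q i k ≥ p_k
    (q : Fin (M - 1) → Fin K → ℝ) (hq : ∀ i k, 0 ≤ q i k ∧ q i k ≤ 1)
    (hqp : ∀ i k,
      max (1 - (γ * ((∑ a ∈ Sx, x a) / M) / x k) ^ ((1 : ℝ) / ((M : ℝ) - 1))) 0 ≤ q i k) :
    ∀ k, μ k * ∏ i, (1 - q i k) ≤ ((1 + γ) / 2) * ((∑ a ∈ Sμ, μ a) / M) := by
  intro k
  -- basic facts
  have hK2 : (2:ℝ) ≤ (K:ℝ) := by exact_mod_cast hK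
  have hM2 : (2:ℝ) ≤ (M:ℝ) := by exact_mod_cast hM
  have hMpos : (0:ℝ) < M := by linarith
  have hbase0 : (0:ℝ) < 1 - 1 / (K:ℝ) := by
    have : 1 / (K:ℝ) < 1 := by
      rw [div_lt_one (by linarith)]; linarith
    linarith
  have hbase1 : (1:ℝ) - 1 / (K:ℝ) ≤ 1 := by
    have : 0 < 1 / (K:ℝ) := by positivity
    linarith
  have hγpos : 0 < γ := by rw [hγ]; exact pow_pos hbase0 _
  have hγle1 : γ ≤ 1 := by rw [hγ]; exact pow_le_one₀ hbase0.le hbase1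
  have hδ0 : 0 ≤ δ := by rw [hδ]; apply div_nonneg <;> linarith
  have hδ1 : δ < 1 := by
    rw [hδ, div_lt_one (by linarith)]; linarith
  have h1mδ : 0 < 1 - δ := by linarith
  have h1pδ : 0 < 1 + δ := by linarith
  -- positivity of x
  have hxpos : ∀ j, 0 < x j := by
    intro j
    have h1 := (hμ j).1
    have h2 := (hest j).2
    nlinarith
  -- average of top estimates
  set xb : ℝ := (∑ a ∈ Sx, x a) / M with hxb
  have hSxne : Sx.Nonempty := Finset.card_pos.mp (by omega)
  have hsumx : 0 < ∑ a ∈ Sx, x a := Finset.sum_pos (fun a _ => hxpos a) hSxne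
  have hxbpos : 0 < xb := by positivity
  set r : ℝ := γ * xb / x k with hr
  have hrpos : 0 < r := by have := hxpos k; positivity
  set t : ℝ := r ^ ((1:ℝ) / ((M:ℝ) - 1)) with ht
  have ht0 : 0 ≤ t := Real.rpow_nonneg hrpos.le _
  -- product bound
  have hprod : ∏ i, (1 - q i k) ≤ t ^ (M - 1) := by
    calc ∏ i : Fin (M-1), (1 - q i k) ≤ ∏ _i : Fin (M-1), t := by
          apply Finset.prod_le_prod
          · intro i _; linarith [(hq i k).2]
          · intro i _
            have h := le_trans (le_max_left _ _) (hqp i k)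
            linarith
      _ = t ^ (M - 1) := by
          rw [Finset.prod_const]; simp
  -- t ^ (M-1) = r
  have htr : t ^ (M - 1) = r := by
    rw [ht, ← Real.rpow_natCast (r ^ ((1:ℝ) / ((M:ℝ) - 1))) (M-1),
      ← Real.rpow_mul hrpos.le]
    have hcast : ((M - 1 : ℕ) : ℝ) = (M:ℝ) - 1 := by
      have : 1 ≤ M := by omega
      push_cast [this]; ring
    rw [hcast, one_div, inv_mul_cancel₀ (by linarith), Real.rpow_one]
  -- sum comparison
  have hA : 0 < ∑ a ∈ Sμ, μ a := by
    apply Finset.sum_pos (fun a _ => (hμ a).1)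
    exact Finset.card_pos.mp (by omega)
  have hsums : ∑ a ∈ Sx, x a ≤ (∑ a ∈ Sμ, μ a) / (1 - δ) := by
    have h2 : ∑ a ∈ Sx, μ a ≤ ∑ a ∈ Sμ, μ a :=
      sum_top_le' μ Sx Sμ (by rw [hSx, hSμ]) hSμtop
    have h1 : ∑ a ∈ Sx, x a ≤ (∑ a ∈ Sx, μ a) / (1 - δ) := by
      rw [le_div_iff₀ h1mδ, Finset.sum_mul]
      apply Finset.sum_le_sum
      intro a _
      have := (hest a).1
      nlinarith
    calc ∑ a ∈ Sx, x a ≤ (∑ a ∈ Sx, μ a) / (1 - δ) := h1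
      _ ≤ (∑ a ∈ Sμ, μ a) / (1 - δ) := by gcongr
  -- chain of bounds
  have hprodr : ∏ i, (1 - q i k) ≤ r := htr ▸ hprod
  have hstep1 : μ k * ∏ i, (1 - q i k) ≤ μ k * r :=
    mul_le_mul_of_nonneg_left hprodr (hμ k).1.le
  have hstep2 : μ k * r ≤ γ * (1 + δ) * xb := by
    have hμx : μ k ≤ (1 + δ) * x k := (hest k).2
    rw [hr]
    rw [div_eq_mul_inv, ← mul_assoc]
    have hxk := hxpos k
    have hinv : 0 < (x k)⁻¹ := by positivity
    calc μ k * (γ * xb) * (x k)⁻¹ ≤ (1 + δ) * x k * (γ * xb) * (x k)⁻¹ := by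
          apply mul_le_mul_of_nonneg_right _ hinv.le
          apply mul_le_mul_of_nonneg_right hμx (by positivity)
      _ = γ * (1 + δ) * xb := by field_simp
  have hxbbound : xb ≤ (∑ a ∈ Sμ, μ a) / ((1 - δ) * M) := by
    rw [hxb, div_le_div_iff₀ hMpos (by positivity)]
    calc (∑ a ∈ Sx, x a) * ((1 - δ) * M) = ((∑ a ∈ Sx, x a) * (1 - δ)) * M := by ring
      _ ≤ (∑ a ∈ Sμ, μ a) * M := by
          apply mul_le_mul_of_nonneg_right _ hMpos.le
          rw [← le_div_iff₀ h1mδ] at *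
          exact hsums
  have hstep3 : γ * (1 + δ) * xb ≤ γ * (1 + δ) * ((∑ a ∈ Sμ, μ a) / ((1 - δ) * M)) :=
    mul_le_mul_of_nonneg_left hxbbound (by positivity)
  have hid : γ * (1 + δ) * ((∑ a ∈ Sμ, μ a) / ((1 - δ) * M))
      = ((1 + γ) / 2) * ((∑ a ∈ Sμ, μ a) / M) := by
    have h2γ : γ * (1 + δ) * 2 = (1 + γ) * (1 - δ) := by
      rw [hδ]; field_simp; ring
    field_simp
    linear_combination h2γ
  calc μ k * ∏ i, (1 - q i k) ≤ μ k * r := hstep1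
    _ ≤ γ * (1 + δ) * xb := hstep2
    _ ≤ γ * (1 + δ) * ((∑ a ∈ Sμ, μ a) / ((1 - δ) * M)) := hstep3
    _ = ((1 + γ) / 2) * ((∑ a ∈ Sμ, μ a) / M) := hid
end
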